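/- Any iteration of the valley-filling operation (replacing a valley entry y_j by y_j + 2) on sequences (y₀,…,y_n) of natural numbers with y₀ = 0, fixed y_n, and consecutive differences ±1 terminates after finitely many steps, ending at the unique valley-free sequence. -/

import Mathlib

/-- A ±1-step sequence of naturals starting at `0` of length `n`. -/
def IsStepSeq (n : ℕ) (y : ℕ → ℕ) : Prop :=
  y 0 = 0 ∧ ∀ i < n, y (i + 1) = y i + 1 ∨ y i = y (i + 1) + 1

/-- One valley-filling step: replace a valley entry `y j` by `y j + 2`. -/
def ValleyStep (n : ℕ) (y y' : ℕ → ℕ) : Prop :=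
  ∃ j, 0 < j ∧ j < n ∧ y (j - 1) = y j + 1 ∧ y (j + 1) = y j + 1 ∧
    y' = Function.update y j (y j + 2)

/-!
Filling a valley raises `∑ i ≤ n, y i` by `2`, while a step sequence satisfies `y i ≤ i`, so
the deficit `∑ i ≤ n, i - ∑ i ≤ n, y i` strictly decreases and no chain of fillings is
infinite. A valley-free step sequence first rises and then falls, so it is the profile
`i ↦ min i (y n + (n - i))`, determined by its endpoint `y n`, which filling never changes.
-/

open Finset

def HasValley (n : ℕ) (y : ℕ → ℕ) : Prop :=
  ∃ j, 0 < j ∧ j < n ∧ y (j - 1) = y j + 1 ∧ y (j + 1) = y j + 1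

def valleyDeficit (n : ℕ) (y : ℕ → ℕ) : ℕ :=
  ∑ i ∈ range (n + 1), i - ∑ i ∈ range (n + 1), y i

section

variable {n : ℕ} {y y' : ℕ → ℕ}

theorem HasValley.exists_valleyStep (h : HasValley n y) : ∃ y', ValleyStep n y y' :=
  let ⟨j, hj0, hjn, hdown, hup⟩ := h
  ⟨_, j, hj0, hjn, hdown, hup, rfl⟩

namespace ValleyStep

theorem apply_last (h : ValleyStep n y y') : y' n = y n := by
  obtain ⟨j, -, hjn, -, -, rfl⟩ := h
  exact Function.update_of_ne hjn.ne' _ _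

theorem sum_range_eq (h : ValleyStep n y y') :
    ∑ i ∈ range (n + 1), y' i = ∑ i ∈ range (n + 1), y i + 2 := by
  obtain ⟨j, -, hjn, -, -, rfl⟩ := h
  have hj : j ∈ range (n + 1) := mem_range.2 (by omega)
  rw [sum_update_of_mem hj, sum_eq_add_sum_sdiff_singleton_of_mem hj]
  ring

end ValleyStep

namespace IsStepSeq

theorem valleyStep (hy : IsStepSeq n y) (h : ValleyStep n y y') : IsStepSeq n y' := by
  obtain ⟨j, hj0, -, hdown, hup, rfl⟩ := h
  refine ⟨by rw [Function.update_of_ne hj0.ne, hy.1], fun i hi => ?_⟩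
  have hstep := hy.2 i hi
  have hdown' : j = i + 1 → y i = y j + 1 := by rintro rfl; exact hdown
  have hup' : j = i → y (i + 1) = y j + 1 := by rintro rfl; exact hup
  simp only [Function.update_apply]
  split_ifs <;> omega

theorem reflTransGen (hy : IsStepSeq n y) (h : Relation.ReflTransGen (ValleyStep n) y y') :
    IsStepSeq n y' ∧ y' n = y n := by
  induction h with
  | refl => exact ⟨hy, rfl⟩
  | tail _ hstep ih => exact ⟨ih.1.valleyStep hstep, hstep.apply_last.trans ih.2⟩

theorem le_add_and_le_add {a b : ℕ} (hy : IsStepSeq n y) (hab : a ≤ b) (hbn : b ≤ n) :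
    y b ≤ y a + (b - a) ∧ y a ≤ y b + (b - a) := by
  induction b, hab using Nat.le_induction with
  | base => simp
  | succ b _ ih =>
    have := ih (by omega)
    have := hy.2 b (by omega)
    omega

theorem le_self {i : ℕ} (hy : IsStepSeq n y) (hi : i ≤ n) : y i ≤ i := by
  simpa [hy.1] using (hy.le_add_and_le_add (Nat.zero_le i) hi).1

theorem sum_range_le (hy : IsStepSeq n y) :
    ∑ i ∈ range (n + 1), y i ≤ ∑ i ∈ range (n + 1), i :=
  sum_le_sum fun _ hi => hy.le_self (Nat.lt_succ_iff.1 (mem_range.1 hi))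

theorem valleyDeficit_lt (hy : IsStepSeq n y) (h : ValleyStep n y y') :
    valleyDeficit n y' < valleyDeficit n y := by
  have := (hy.valleyStep h).sum_range_le
  have := h.sum_range_eq
  unfold valleyDeficit
  omega

theorem eq_self_of_rise (hy : IsStepSeq n y) (hnv : ¬ HasValley n y) {i : ℕ} (hi : i < n)
    (hrise : y (i + 1) = y i + 1) : y i = i := by
  induction i with
  | zero => exact hy.1
  | succ i ih =>
    rcases hy.2 i (by omega) with hprev | hprev
    · rw [hprev, ih (by omega) hprev]
    · exact (hnv ⟨i + 1, i.succ_pos, hi, hprev, hrise⟩).elim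

theorem eq_min_of_not_hasValley (hy : IsStepSeq n y) (hnv : ¬ HasValley n y) {i : ℕ}
    (hi : i ≤ n) : y i = min i (y n + (n - i)) := by
  have hshape : y i = i ∨ y i = y n + (n - i) := by
    induction hi using Nat.decreasingInduction with
    | self => simp
    | of_succ k hk ih =>
      rcases hy.2 k hk with hrise | hfall
      · exact .inl (hy.eq_self_of_rise hnv hk hrise)
      · have := hy.le_self hk.le
        omega
  have := hy.le_self hi
  have := (hy.le_add_and_le_add hi le_rfl).2
  omega

end IsStepSeq

theorem wellFounded_valleyStep (n : ℕ) :
    WellFounded fun y' y => IsStepSeq n y ∧ ValleyStep n y y' :=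
  Subrelation.wf (fun h => h.1.valleyDeficit_lt h.2) (InvImage.wf (valleyDeficit n) wellFounded_lt)

theorem IsStepSeq.exists_reflTransGen_not_hasValley (hy : IsStepSeq n y) :
    ∃ z, Relation.ReflTransGen (ValleyStep n) y z ∧ ¬ HasValley n z := by
  induction y using (wellFounded_valleyStep n).induction with
  | _ y ih =>
    by_cases hv : HasValley n y
    · obtain ⟨y', hstep⟩ := hv.exists_valleyStep
      obtain ⟨z, hz, hnv⟩ := ih y' ⟨hy, hstep⟩ (hy.valleyStep hstep)
      exact ⟨z, .head hstep hz, hnv⟩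
    · exact ⟨y, .refl, hv⟩

end

theorem valley_filling_terminates_general (n : ℕ) :
    (¬ ∃ F : ℕ → (ℕ → ℕ), IsStepSeq n (F 0) ∧
        ∀ k : ℕ, ValleyStep n (F k) (F (k + 1))) ∧
    (∀ y : ℕ → ℕ, IsStepSeq n y →
      ∃ z : ℕ → ℕ, Relation.ReflTransGen (ValleyStep n) y z ∧
        (¬ ∃ j, 0 < j ∧ j < n ∧ z (j - 1) = z j + 1 ∧ z (j + 1) = z j + 1) ∧
        ∀ z' : ℕ → ℕ, Relation.ReflTransGen (ValleyStep n) y z' →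
          (¬ ∃ j, 0 < j ∧ j < n ∧ z' (j - 1) = z' j + 1 ∧ z' (j + 1) = z' j + 1) →
          ∀ i ≤ n, z' i = z i) := by
  refine ⟨fun ⟨F, hF0, hF⟩ => ?_, fun y hy => ?_⟩
  · have hseq : ∀ k, IsStepSeq n (F k) := fun k => by
      induction k with
      | zero => exact hF0
      | succ k ih => exact ih.valleyStep (hF k)
    exact (wellFounded_iff_isEmpty_descending_chain.1 (wellFounded_valleyStep n)).elim
      ⟨F, fun k => ⟨hseq k, hF k⟩⟩
  · obtain ⟨z, hz, hnv⟩ := hy.exists_reflTransGen_not_hasValley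
    refine ⟨z, hz, hnv, fun z' hz' hnv' i hi => ?_⟩
    obtain ⟨hzseq, hzn⟩ := hy.reflTransGen hz
    obtain ⟨hz'seq, hz'n⟩ := hy.reflTransGen hz'
    rw [hz'seq.eq_min_of_not_hasValley hnv' hi, hzseq.eq_min_of_not_hasValley hnv hi, hz'n, hzn]

/-- Iterating valley-filling always terminates (there is no infinite chain of
valley-filling steps), and every sequence reaches, after finitely many steps, the
unique valley-free sequence with the same endpoints. -/
theorem valley_filling_terminates (n : ℕ) (hn : 1 ≤ n) :
    (¬ ∃ F : ℕ → (ℕ → ℕ), IsStepSeq n (F 0) ∧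
        ∀ k : ℕ, ValleyStep n (F k) (F (k + 1))) ∧
    (∀ y : ℕ → ℕ, IsStepSeq n y →
      ∃ z : ℕ → ℕ, Relation.ReflTransGen (ValleyStep n) y z ∧
        (¬ ∃ j, 0 < j ∧ j < n ∧ z (j - 1) = z j + 1 ∧ z (j + 1) = z j + 1) ∧
        ∀ z' : ℕ → ℕ, Relation.ReflTransGen (ValleyStep n) y z' →
          (¬ ∃ j, 0 < j ∧ j < n ∧ z' (j - 1) = z' j + 1 ∧ z' (j + 1) = z' j + 1) →
          ∀ i ≤ n, z' i = z i) :=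
  valley_filling_terminates_general n
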